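/- Let H be a Hopf algebra over a field k, I = ker ε the augmentation ideal, and Q(H) = I/I². Then the map Δ_L = Δ − τ∘Δ (τ the flip) sends I into I ⊗ I and I² into I² ⊗ I + I ⊗ I², hence induces a well-defined map Ῡ : Q(H) → Q(H) ⊗ Q(H) which makes Q(H) a Lie coalgebra. -/

import Mathlib

/-!
For `x ∈ I = ker ε`, applying `(id - η ε) ⊗ (id - η ε)` to `Δ x` shows
`Δ x = x ⊗ 1 + 1 ⊗ x + u` with `u ∈ I ⊗ I`; the symmetric part is killed by `Δ_L = Δ - τ Δ`, so
`Δ_L x = u - τ u`. For `a, b ∈ I` the same decomposition and multiplicativity of `Δ` give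
`Δ (a b) = P_a P_b + s` with `P_a = a ⊗ 1 + 1 ⊗ a`, `P_a P_b` symmetric and `s ∈ I² ⊗ I + I ⊗ I²`.

On any coassociative coalgebra `Δ_L` is antisymmetric, and coassociativity turns
`(Δ_L ⊗ 1) Δ_L` into `(1 - σ₁₂)(1 - ξ²)(1 ⊗ Δ) Δ`, which the cyclic sum `1 + ξ + ξ²` annihilates.
Both identities are natural, so they descend to the lift of `Δ_L` to `I` (over a field
`I ⊗ I → H ⊗ H` is injective) and from there to the quotient `I / I²`.
-/

open TensorProduct Coalgebra

variable {k : Type*} [Field k] {Q : Type*} [AddCommGroup Q] [Module k Q]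

/-- The cyclic permutation `ξ(x ⊗ y ⊗ z) = z ⊗ x ⊗ y` on `Q ⊗ (Q ⊗ Q)`. -/
noncomputable def cyc : Q ⊗[k] (Q ⊗[k] Q) →ₗ[k] Q ⊗[k] (Q ⊗[k] Q) :=
  (TensorProduct.comm k (Q ⊗[k] Q) Q).toLinearMap ∘ₗ
    (TensorProduct.assoc k Q Q Q).symm.toLinearMap

section LieCobracket

variable {M : Type*} [AddCommGroup M] [Module k M]

@[simp]
lemma cyc_tmul (x y z : Q) : cyc (k := k) (x ⊗ₜ (y ⊗ₜ z)) = z ⊗ₜ (x ⊗ₜ y) := by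
  simp [cyc]

variable (k Q) in
noncomputable def swapLeft : Q ⊗[k] (Q ⊗[k] Q) →ₗ[k] Q ⊗[k] (Q ⊗[k] Q) :=
  (TensorProduct.assoc k Q Q Q).toLinearMap ∘ₗ
    (TensorProduct.comm k Q Q).toLinearMap.rTensor Q ∘ₗ
    (TensorProduct.assoc k Q Q Q).symm.toLinearMap

@[simp]
lemma swapLeft_tmul (x y z : Q) : swapLeft k Q (x ⊗ₜ (y ⊗ₜ z)) = y ⊗ₜ (x ⊗ₜ z) := by
  simp [swapLeft]

lemma cyclicSum_comp_sub_swapLeft_comp_sub_cyc_sq :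
    (LinearMap.id + cyc (k := k) (Q := Q) + cyc ∘ₗ cyc) ∘ₗ
      ((LinearMap.id - swapLeft k Q) ∘ₗ (LinearMap.id - cyc ∘ₗ cyc)) = 0 :=
  ext_threefold' fun x y z ↦ by
    simp only [LinearMap.comp_apply, LinearMap.add_apply, LinearMap.sub_apply,
      LinearMap.id_apply, LinearMap.zero_apply, cyc_tmul, swapLeft_tmul, map_sub]
    abel

variable (k Q) in
noncomputable def coJacobiator (δ : Q →ₗ[k] Q ⊗[k] Q) : Q →ₗ[k] Q ⊗[k] (Q ⊗[k] Q) :=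
  (LinearMap.id + cyc + cyc ∘ₗ cyc) ∘ₗ (TensorProduct.assoc k Q Q Q).toLinearMap ∘ₗ
    TensorProduct.map δ LinearMap.id ∘ₗ δ

variable (k Q) in
structure IsLieCobracket (δ : Q →ₗ[k] Q ⊗[k] Q) : Prop where
  comm_comp : (TensorProduct.comm k Q Q).toLinearMap ∘ₗ δ = -δ
  coJacobiator_eq_zero : coJacobiator k Q δ = 0

variable {δ : Q →ₗ[k] Q ⊗[k] Q} {δ' : M →ₗ[k] M ⊗[k] M} {f : Q →ₗ[k] M}

lemma map_comp_comm_comp (h : TensorProduct.map f f ∘ₗ δ = δ' ∘ₗ f) :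
    TensorProduct.map f f ∘ₗ (TensorProduct.comm k Q Q).toLinearMap ∘ₗ δ =
      ((TensorProduct.comm k M M).toLinearMap ∘ₗ δ') ∘ₗ f := by
  rw [← LinearMap.comp_assoc, map_comp_comm_eq, LinearMap.comp_assoc, h, LinearMap.comp_assoc]

lemma map_comp_coJacobiator (h : TensorProduct.map f f ∘ₗ δ = δ' ∘ₗ f) :
    TensorProduct.map f (TensorProduct.map f f) ∘ₗ coJacobiator k Q δ =
      coJacobiator k M δ' ∘ₗ f := by
  have h₂ : TensorProduct.map (TensorProduct.map f f) f ∘ₗ TensorProduct.map δ LinearMap.id =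
      TensorProduct.map δ' LinearMap.id ∘ₗ TensorProduct.map f f := by
    rw [← TensorProduct.map_comp, ← TensorProduct.map_comp, h, LinearMap.comp_id,
      LinearMap.id_comp]
  have hsum : TensorProduct.map f (TensorProduct.map f f) ∘ₗ
      (LinearMap.id + cyc + cyc ∘ₗ cyc) =
      (LinearMap.id + cyc + cyc ∘ₗ cyc) ∘ₗ TensorProduct.map f (TensorProduct.map f f) :=
    ext_threefold' fun _ _ _ ↦ by simp
  simp only [coJacobiator, LinearMap.comp_assoc]
  rw [← LinearMap.comp_assoc _ (LinearMap.id + cyc + cyc ∘ₗ cyc), hsum, LinearMap.comp_assoc,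
    ← LinearMap.comp_assoc _ (TensorProduct.assoc k Q Q Q).toLinearMap,
    map_map_comp_assoc_eq, LinearMap.comp_assoc, ← LinearMap.comp_assoc δ, h₂,
    LinearMap.comp_assoc, h]

lemma IsLieCobracket.of_injective (hδ' : IsLieCobracket k M δ') (hf : Function.Injective f)
    (h : TensorProduct.map f f ∘ₗ δ = δ' ∘ₗ f) : IsLieCobracket k Q δ where
  comm_comp := by
    have hff := TensorProduct.map_injective_of_flat_flat f f hf hf
    rw [← LinearMap.cancel_left hff, map_comp_comm_comp h, hδ'.comm_comp,
      LinearMap.comp_neg, h, LinearMap.neg_comp]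
  coJacobiator_eq_zero := by
    have hfff := TensorProduct.map_injective_of_flat_flat f _ hf
      (TensorProduct.map_injective_of_flat_flat f f hf hf)
    rw [← LinearMap.cancel_left hfff, map_comp_coJacobiator h, hδ'.coJacobiator_eq_zero,
      LinearMap.comp_zero, LinearMap.zero_comp]

lemma IsLieCobracket.of_surjective (hδ : IsLieCobracket k Q δ) (hf : Function.Surjective f)
    (h : TensorProduct.map f f ∘ₗ δ = δ' ∘ₗ f) : IsLieCobracket k M δ' where
  comm_comp := by
    rw [← LinearMap.cancel_right hf, ← map_comp_comm_comp h, hδ.comm_comp,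
      LinearMap.comp_neg, h, LinearMap.neg_comp]
  coJacobiator_eq_zero := by
    rw [← LinearMap.cancel_right hf, ← map_comp_coJacobiator h, hδ.coJacobiator_eq_zero,
      LinearMap.comp_zero, LinearMap.zero_comp]

end LieCobracket

section LieComul

variable (R C : Type*) [CommRing R] [AddCommGroup C] [Module R C] [Coalgebra R C]

noncomputable def lieComul : C →ₗ[R] C ⊗[R] C :=
  comul - (TensorProduct.comm R C C).toLinearMap ∘ₗ comul

variable {R C}

@[simp]
lemma lieComul_apply (x : C) :
    lieComul R C x = comul x - TensorProduct.comm R C C (comul x) :=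
  rfl

lemma comm_comp_lieComul :
    (TensorProduct.comm R C C).toLinearMap ∘ₗ lieComul R C = -lieComul R C := by
  rw [lieComul, LinearMap.comp_sub, comm_comp_comm_assoc, neg_sub]

end LieComul

section Coalgebra

variable {C : Type*} [AddCommGroup C] [Module k C] [Coalgebra k C]

lemma assoc_comp_rTensor_comul_comp_comm :
    (TensorProduct.assoc k C C C).toLinearMap ∘ₗ comul.rTensor C ∘ₗ
      (TensorProduct.comm k C C).toLinearMap = cyc ∘ₗ cyc ∘ₗ comul.lTensor C := by
  have hcomm : (TensorProduct.assoc k C C C).toLinearMap ∘ₗ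
      (TensorProduct.comm k C (C ⊗[k] C)).toLinearMap = cyc ∘ₗ cyc :=
    ext_threefold' fun _ _ _ ↦ by simp
  rw [LinearMap.rTensor, map_comp_comm_eq, ← LinearMap.comp_assoc, hcomm, LinearMap.comp_assoc]
  rfl

lemma assoc_comp_rTensor_lieComul_comp_lieComul :
    (TensorProduct.assoc k C C C).toLinearMap ∘ₗ
        TensorProduct.map (lieComul k C) LinearMap.id ∘ₗ lieComul k C =
      ((LinearMap.id - swapLeft k C) ∘ₗ (LinearMap.id - cyc ∘ₗ cyc)) ∘ₗ
        comul.lTensor C ∘ₗ comul := by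
  have hswap (u : C ⊗[k] C ⊗[k] C) : TensorProduct.assoc k C C C
      ((TensorProduct.comm k C C).toLinearMap.rTensor C u) =
        swapLeft k C (TensorProduct.assoc k C C C u) := by
    simp [swapLeft]
  have hcyc (u : C ⊗[k] C) :
      TensorProduct.assoc k C C C (comul.rTensor C (TensorProduct.comm k C C u)) =
        cyc (cyc (comul.lTensor C u)) :=
    congr($assoc_comp_rTensor_comul_comp_comm u)
  ext x
  simp only [lieComul, LinearMap.comp_apply, LinearMap.sub_apply, LinearMap.id_apply,
    ← LinearMap.rTensor_def, LinearMap.rTensor_sub, LinearMap.rTensor_comp, map_sub,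
    LinearEquiv.coe_coe, hswap, hcyc, coassoc_apply]

theorem isLieCobracket_lieComul : IsLieCobracket k C (lieComul k C) where
  comm_comp := comm_comp_lieComul
  coJacobiator_eq_zero := by
    rw [coJacobiator, assoc_comp_rTensor_lieComul_comp_lieComul, ← LinearMap.comp_assoc,
      cyclicSum_comp_sub_swapLeft_comp_sub_cyc_sq, LinearMap.zero_comp]

end Coalgebra

section TensorSubmodules

variable {R : Type*} [CommRing R]

lemma comm_mem_range_mapIncl {M N : Type*} [AddCommGroup M] [Module R M] [AddCommGroup N]
    [Module R N] {p : Submodule R M} {q : Submodule R N} {z : M ⊗[R] N}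
    (hz : z ∈ LinearMap.range (mapIncl p q)) :
    TensorProduct.comm R M N z ∈ LinearMap.range (mapIncl q p) := by
  obtain ⟨w, rfl⟩ := hz
  exact ⟨TensorProduct.comm R p q w, map_comm _ _ w⟩

variable {A : Type*} [Ring A] [Algebra R A]

lemma range_mapIncl_mul_range_mapIncl_le (p q p' q' : Submodule R A) :
    LinearMap.range (mapIncl p q) * LinearMap.range (mapIncl p' q') ≤
      LinearMap.range (mapIncl (p * p') (q * q')) := by
  rw [range_map_eq_span_tmul, range_map_eq_span_tmul, Submodule.span_mul_span,
    Submodule.span_le]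
  rintro _ ⟨_, ⟨a, b, rfl⟩, _, ⟨c, d, rfl⟩, rfl⟩
  exact ⟨⟨a * c, Submodule.mul_mem_mul a.2 c.2⟩ ⊗ₜ ⟨b * d, Submodule.mul_mem_mul b.2 d.2⟩,
    by simp [Algebra.TensorProduct.tmul_mul_tmul]⟩

end TensorSubmodules

section Augmentation

variable (R A : Type*) [CommRing R] [Ring A] [Bialgebra R A]

abbrev augmentationIdeal : Submodule R A := LinearMap.ker (counit (R := R) (A := A))

variable {R A}

lemma augmentationIdeal_mul_le :
    augmentationIdeal R A * augmentationIdeal R A ≤ augmentationIdeal R A :=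
  Submodule.mul_le.2 fun a ha b hb ↦ by simp_all

lemma comul_sub_mem_range_mapIncl {x : A} (hx : x ∈ augmentationIdeal R A) :
    comul x - (x ⊗ₜ[R] 1 + 1 ⊗ₜ[R] x) ∈
      LinearMap.range (mapIncl (augmentationIdeal R A) (augmentationIdeal R A)) := by
  set p : A →ₗ[R] A := LinearMap.id - Algebra.linearMap R A ∘ₗ counit
  have hp : LinearMap.range p ≤ LinearMap.range (augmentationIdeal R A).subtype := by
    rintro _ ⟨y, rfl⟩
    simp [p]
  have hrTensor : p.rTensor A (comul x) = comul x - 1 ⊗ₜ x := by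
    simp [p, LinearMap.rTensor_sub, LinearMap.rTensor_comp, rTensor_counit_comul]
  have hlTensor : p.lTensor A (comul x) = comul x - x ⊗ₜ 1 := by
    simp [p, LinearMap.lTensor_sub, LinearMap.lTensor_comp, lTensor_counit_comul]
  have hpx : p x = x := by simp_all [p]
  have : TensorProduct.map p p (comul x) = comul x - (x ⊗ₜ[R] 1 + 1 ⊗ₜ[R] x) := by
    rw [← LinearMap.lTensor_comp_rTensor, LinearMap.comp_apply, hrTensor, map_sub, hlTensor,
      LinearMap.lTensor_tmul, hpx, sub_sub]
  exact this ▸ range_map_mono hp hp ⟨comul x, rfl⟩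

lemma lieComul_mem_of_comul_sub_mem {W : Submodule R (A ⊗[R] A)}
    (hW : ∀ z ∈ W, TensorProduct.comm R A A z ∈ W) {x : A} {s : A ⊗[R] A}
    (hs : TensorProduct.comm R A A s = s) (hx : comul x - s ∈ W) :
    lieComul R A x ∈ W := by
  have : lieComul R A x = (comul x - s) - TensorProduct.comm R A A (comul x - s) := by
    simp [hs]
  exact this ▸ sub_mem hx (hW _ hx)

theorem lieComul_mem_range_mapIncl {x : A} (hx : x ∈ augmentationIdeal R A) :
    lieComul R A x ∈
      LinearMap.range (mapIncl (augmentationIdeal R A) (augmentationIdeal R A)) :=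
  lieComul_mem_of_comul_sub_mem (fun _ ↦ comm_mem_range_mapIncl) (by simp [add_comm])
    (comul_sub_mem_range_mapIncl hx)

theorem lieComul_mem_of_mem_mul {x : A}
    (hx : x ∈ augmentationIdeal R A * augmentationIdeal R A) :
    lieComul R A x ∈
      LinearMap.range (mapIncl (augmentationIdeal R A * augmentationIdeal R A)
        (augmentationIdeal R A)) ⊔
      LinearMap.range (mapIncl (augmentationIdeal R A)
        (augmentationIdeal R A * augmentationIdeal R A)) := by
  set I := augmentationIdeal R A
  set J := LinearMap.range (mapIncl I I)
  set K := LinearMap.range (mapIncl I 1) ⊔ LinearMap.range (mapIncl 1 I)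
  set S := LinearMap.range (mapIncl (I * I) I) ⊔ LinearMap.range (mapIncl I (I * I))
  have hS : ∀ z ∈ S, TensorProduct.comm R A A z ∈ S := by
    intro z hz
    obtain ⟨z₁, hz₁, z₂, hz₂, rfl⟩ := Submodule.mem_sup.1 hz
    rw [map_add, add_comm]
    exact Submodule.add_mem_sup (comm_mem_range_mapIncl hz₂) (comm_mem_range_mapIncl hz₁)
  have hKJ : K * J ≤ S := by
    have h₁ := range_mapIncl_mul_range_mapIncl_le I 1 I I
    have h₂ := range_mapIncl_mul_range_mapIncl_le 1 I I I
    rw [one_mul] at h₁ h₂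
    exact (Submodule.sup_mul ..).trans_le (sup_le_sup h₁ h₂)
  have hJK : J * K ≤ S := by
    have h₁ := range_mapIncl_mul_range_mapIncl_le I I I 1
    have h₂ := range_mapIncl_mul_range_mapIncl_le I I 1 I
    rw [mul_one] at h₁ h₂
    exact (Submodule.mul_sup ..).trans_le (sup_le_sup h₁ h₂)
  have hJJ : J * J ≤ S :=
    (range_mapIncl_mul_range_mapIncl_le I I I I).trans <| le_sup_of_le_left <|
      range_mapIncl_mono le_rfl augmentationIdeal_mul_le
  have hK {a : A} (ha : a ∈ I) : a ⊗ₜ[R] 1 + 1 ⊗ₜ[R] a ∈ K :=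
    Submodule.add_mem_sup ⟨⟨a, ha⟩ ⊗ₜ ⟨1, Submodule.one_le.1 le_rfl⟩, rfl⟩
      ⟨⟨1, Submodule.one_le.1 le_rfl⟩ ⊗ₜ ⟨a, ha⟩, rfl⟩
  refine Submodule.mul_induction_on hx (fun a ha b hb ↦ ?_) fun _ _ ↦ by
    simpa only [map_add] using add_mem
  set Pa := a ⊗ₜ[R] (1 : A) + 1 ⊗ₜ[R] a
  set Pb := b ⊗ₜ[R] (1 : A) + 1 ⊗ₜ[R] b
  have hsymm : TensorProduct.comm R A A (Pa * Pb) = Pa * Pb := by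
    simp only [Pa, Pb, add_mul, mul_add, Algebra.TensorProduct.tmul_mul_tmul, one_mul, mul_one,
      map_add, comm_tmul]
    abel
  have hdecomp : comul (a * b) - Pa * Pb =
      Pa * (comul b - Pb) + (comul a - Pa) * Pb + (comul a - Pa) * (comul b - Pb) := by
    rw [Bialgebra.comul_mul]
    noncomm_ring
  refine lieComul_mem_of_comul_sub_mem hS hsymm (hdecomp ▸ add_mem (add_mem ?_ ?_) ?_)
  · exact hKJ (Submodule.mul_mem_mul (hK ha) (comul_sub_mem_range_mapIncl hb))
  · exact hJK (Submodule.mul_mem_mul (comul_sub_mem_range_mapIncl ha) (hK hb))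
  · exact hJJ (Submodule.mul_mem_mul (comul_sub_mem_range_mapIncl ha)
      (comul_sub_mem_range_mapIncl hb))

end Augmentation

lemma LinearMap.exists_comp_eq_of_range_le {R M N P : Type*} [Semiring R] [AddCommMonoid M]
    [AddCommMonoid N] [AddCommMonoid P] [Module R M] [Module R N] [Module R P]
    {f : M →ₗ[R] P} {g : N →ₗ[R] P} (hg : Function.Injective g) (h : range f ≤ range g) :
    ∃ f' : M →ₗ[R] N, g ∘ₗ f' = f :=
  ⟨(LinearEquiv.ofInjective g hg).symm ∘ₗ f.codRestrict _ fun x ↦ h ⟨x, rfl⟩,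
    LinearMap.ext fun x ↦ by
      simp [← LinearEquiv.ofInjective_apply (h := hg)]⟩

section Quotient

variable {M : Type*} [AddCommGroup M] [Module k M]

lemma map_mkQ_mkQ_eq_zero {P N : Submodule k M} (hN : N ≤ P) {z : P ⊗[k] P}
    (hz : mapIncl P P z ∈
      LinearMap.range (mapIncl N P) ⊔ LinearMap.range (mapIncl P N)) :
    TensorProduct.map (N.comap P.subtype).mkQ (N.comap P.subtype).mkQ z = 0 := by
  obtain ⟨_, ⟨a, rfl⟩, _, ⟨b, rfl⟩, hab⟩ := Submodule.mem_sup.1 hz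
  set j := Submodule.inclusion hN
  have hz : z = TensorProduct.map j LinearMap.id a + TensorProduct.map LinearMap.id j b := by
    apply map_injective_of_flat_flat _ _ P.injective_subtype P.injective_subtype
    rw [← hab, map_add, map_map, map_map]
    rfl
  have hj : (N.comap P.subtype).mkQ ∘ₗ j = 0 := by
    ext c
    simp [j]
  rw [hz, map_add, map_map, map_map, hj, map_zero_left, map_zero_right,
    LinearMap.zero_apply, LinearMap.zero_apply, add_zero]

end Quotient

/-- Let `H` be a Hopf algebra over a field `k`, `I = ker ε` the augmentation ideal
and `Q(H) = I/I²` the indecomposables.  Then `Δ_L = Δ − τ∘Δ` sends `I` into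
`I ⊗ I` and `I²` into `I² ⊗ I + I ⊗ I²`, hence induces a well-defined map
`Ῡ : Q(H) → Q(H) ⊗ Q(H)` which makes `Q(H)` a Lie coalgebra (antisymmetric and
satisfying the co-Jacobi identity). -/
theorem stmt15 {H : Type*} [Ring H] [HopfAlgebra k H] :
    letI I : Submodule k H := LinearMap.ker (counit (R := k) (A := H))
    letI I2 : Submodule k H := I * I
    letI D : H →ₗ[k] H ⊗[k] H :=
      comul - (TensorProduct.comm k H H).toLinearMap ∘ₗ comul
    letI QH := ↥I ⧸ Submodule.comap I.subtype I2
    letI π : ↥I →ₗ[k] QH := (Submodule.comap I.subtype I2).mkQ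
    -- `Δ_L` sends `I` into `I ⊗ I`:
    (∀ x ∈ I, D x ∈ LinearMap.range (TensorProduct.map I.subtype I.subtype)) ∧
    -- `Δ_L` sends `I²` into `I² ⊗ I + I ⊗ I²`:
    (∀ x ∈ I2, D x ∈ LinearMap.range (TensorProduct.map I2.subtype I.subtype)
      ⊔ LinearMap.range (TensorProduct.map I.subtype I2.subtype)) ∧
    -- hence there is a well-defined induced map `Ῡ`, making `Q(H)` a Lie coalgebra:
    (∃ Υ : QH →ₗ[k] QH ⊗[k] QH,
      (∀ (x : ↥I) (y : ↥I ⊗[k] ↥I),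
        TensorProduct.map I.subtype I.subtype y = D x.1 →
          Υ (π x) = TensorProduct.map π π y) ∧
      ((TensorProduct.comm k QH QH).toLinearMap ∘ₗ Υ = -Υ) ∧
      ((LinearMap.id + cyc (k := k) (Q := QH) + cyc ∘ₗ cyc) ∘ₗ
        (TensorProduct.assoc k QH QH QH).toLinearMap ∘ₗ
          TensorProduct.map Υ LinearMap.id ∘ₗ Υ = 0)) := by
  set I : Submodule k H := LinearMap.ker counit
  set N := (I * I).comap I.subtype
  have hinj : Function.Injective (mapIncl I I) :=
    map_injective_of_flat_flat _ _ I.injective_subtype I.injective_subtype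
  obtain ⟨D', hD'⟩ : ∃ D' : I →ₗ[k] I ⊗[k] I, mapIncl I I ∘ₗ D' = lieComul k H ∘ₗ I.subtype :=
    LinearMap.exists_comp_eq_of_range_le hinj <| by
      rintro _ ⟨x, rfl⟩
      exact lieComul_mem_range_mapIncl x.2
  have hker : N ≤ LinearMap.ker (TensorProduct.map N.mkQ N.mkQ ∘ₗ D') := fun x hx ↦
    map_mkQ_mkQ_eq_zero augmentationIdeal_mul_le <|
      (congr($hD' x) : mapIncl I I (D' x) = _) ▸ lieComul_mem_of_mem_mul hx
  have hΥ : IsLieCobracket k (I ⧸ N) (N.liftQ _ hker) :=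
    (isLieCobracket_lieComul.of_injective I.injective_subtype hD').of_surjective
      N.mkQ_surjective (N.liftQ_mkQ _ hker).symm
  refine ⟨fun _ ↦ lieComul_mem_range_mapIncl, fun _ ↦ lieComul_mem_of_mem_mul, N.liftQ _ hker,
    fun x y hy ↦ ?_, hΥ.comm_comp, hΥ.coJacobiator_eq_zero⟩
  obtain rfl : y = D' x := hinj (hy.trans congr($hD' x).symm)
  rfl
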